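/- If A ⊆ B is regular and B ⊆ C is regular, then A ⊆ C is regular. -/

import Mathlib

theorem regular_trans_general {α : Type*} (dcl acl : Set α → Set α)
    (dcl_mono : ∀ X Y : Set α, X ⊆ Y → dcl X ⊆ dcl Y)
    (acl_mono : ∀ X Y : Set α, X ⊆ Y → acl X ⊆ acl Y)
    (dcl_le_acl : ∀ X : Set α, dcl X ⊆ acl X)
    (A B C : Set α) (hAB : A ⊆ B) (hBC : B ⊆ C)
    (hregAB : dcl B ∩ acl A = dcl A)
    (hregBC : dcl C ∩ acl B = dcl B) :
    dcl C ∩ acl A = dcl A := by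
  refine Set.Subset.antisymm (fun x ⟨hxC, hxA⟩ => ?_) fun x hx =>
    ⟨dcl_mono A C (hAB.trans hBC) hx, dcl_le_acl A hx⟩
  have hxB : x ∈ dcl B := hregBC ▸ ⟨hxC, acl_mono A B hAB hxA⟩
  exact hregAB ▸ ⟨hxB, hxA⟩

/-- Transitivity of regularity: if `A ⊆ B` is regular and `B ⊆ C`
is regular, then `A ⊆ C` is regular. -/
theorem regular_trans {α : Type*} (dcl acl : Set α → Set α)
    (dcl_mono : ∀ X Y : Set α, X ⊆ Y → dcl X ⊆ dcl Y)
    (dcl_idem : ∀ X : Set α, dcl (dcl X) = dcl X)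
    (dcl_ext : ∀ X : Set α, X ⊆ dcl X)
    (acl_mono : ∀ X Y : Set α, X ⊆ Y → acl X ⊆ acl Y)
    (acl_idem : ∀ X : Set α, acl (acl X) = acl X)
    (acl_ext : ∀ X : Set α, X ⊆ acl X)
    (dcl_le_acl : ∀ X : Set α, dcl X ⊆ acl X)
    (A B C : Set α) (hAB : A ⊆ B) (hBC : B ⊆ C)
    (hregAB : dcl B ∩ acl A = dcl A)
    (hregBC : dcl C ∩ acl B = dcl B) :
    dcl C ∩ acl A = dcl A :=
  regular_trans_general dcl acl dcl_mono acl_mono dcl_le_acl A B C hAB hBC hregAB hregBC
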